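/- Let G be a 2-vertex-connected simple graph and let e = uv be an edge of G such that {u, v} is a 2-vertex cut of G (an irrelevant edge). Then there exists a minimum-size 2-edge-connected spanning subgraph of G that does not contain e. -/

import Mathlib

variable {V : Type*}

/-- Reachability between vertices using only edges from the edge set `F`. -/
def ReachE (F : Set (Sym2 V)) (a b : V) : Prop :=
  Relation.ReflTransGen (fun x y => s(x, y) ∈ F) a b

/-- `H` is (the edge set of) a 2-edge-connected spanning subgraph: it connects all
vertices and it keeps doing so after removing any single edge (i.e. it is connected,
spanning and bridgeless). -/
def TwoECSS (H : Set (Sym2 V)) : Prop :=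
  (∀ a b : V, ReachE H a b) ∧ ∀ e ∈ H, ∀ a b : V, ReachE (H \ {e}) a b

/-!
Any 2-edge-connected spanning subgraph `F` containing `e = uv` can be traded for one that is no
larger and avoids `e`. Split `G - {u, v}` into the component `S` of one vertex and the rest `T`.
As `F - e` is connected and the two sides meet only in `u` and `v`, it joins `u` to `v` inside one
side, say `T ∪ {u, v}`. On the other side every vertex of `S` reaches `u` or `v` in `F - e`, and
since `G - u` is connected some edge `g` of `G` at `S` joins a vertex reaching `u` to one reaching
`v`. Then `F - e + g` contains two edge-disjoint `u`–`v` connections, one on each side, so it is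
still 2-edge-connected.
-/

theorem Set.sym2_mono {α : Type*} {s t : Set α} (h : s ⊆ t) : s.sym2 ⊆ t.sym2 :=
  fun _ hz => Set.mem_sym2_iff_subset.2 ((Set.mem_sym2_iff_subset.1 hz).trans h)

theorem exists_ne_and_ne_of_distinct {α : Type*} {a b c : α} (hab : a ≠ b) (hac : a ≠ c)
    (hbc : b ≠ c) (p q : α) : ∃ w, w ≠ p ∧ w ≠ q := by
  by_cases hap : a = p
  · subst hap
    by_cases hbq : b = q
    · exact ⟨c, hac.symm, hbq ▸ hbc.symm⟩
    · exact ⟨b, hab.symm, hbq⟩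
  · by_cases haq : a = q
    · subst haq
      by_cases hbp : b = p
      · exact ⟨c, hbp ▸ hbc.symm, hac.symm⟩
      · exact ⟨b, hbp, hab.symm⟩
    · exact ⟨a, hap, haq⟩

theorem Relation.ReflTransGen.exists_mem_notMem {α : Type*} {r : α → α → Prop} {X : Set α}
    {a b : α} (h : ReflTransGen r a b) (ha : a ∈ X) (hb : b ∉ X) :
    ∃ z c, z ∈ X ∧ c ∉ X ∧ r z c := by
  induction h with
  | refl => exact absurd ha hb
  | @tail c d _ hcd ih =>
    by_cases hc : c ∈ X
    · exact ⟨c, d, hc, hb, hcd⟩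
    · exact ih hc

namespace ReachE

variable {F K : Set (Sym2 V)} {a b c u v : V}

theorem single (h : s(a, b) ∈ F) : ReachE F a b := Relation.ReflTransGen.single h

theorem trans (hab : ReachE F a b) (hbc : ReachE F b c) : ReachE F a c :=
  Relation.ReflTransGen.trans hab hbc

theorem mono (hFK : F ⊆ K) (h : ReachE F a b) : ReachE K a b :=
  Relation.ReflTransGen.mono (fun _ _ hxy => hFK hxy) _ _ h

theorem symm (h : ReachE F a b) : ReachE F b a :=
  Relation.reflTransGen_swap.1 <|
    Relation.ReflTransGen.mono
      (fun x y (hxy : s(x, y) ∈ F) => (Sym2.eq_swap ▸ hxy : s(y, x) ∈ F)) _ _ h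

theorem mem_of_subset_sym2 {W : Set V} (hF : F ⊆ W.sym2) (h : ReachE F a b) (ha : a ∈ W) :
    b ∈ W := by
  induction h with
  | refl => exact ha
  | tail _ hcd _ => exact (hF hcd).2

theorem of_sdiff_subset (h : ReachE F a b) (hsub : F \ {s(u, v)} ⊆ K) (huv : ReachE K u v) :
    ReachE K a b := by
  induction h with
  | refl => exact .refl
  | @tail c d _ hcd ih =>
    by_cases he : s(c, d) = s(u, v)
    · rcases Sym2.eq_iff.1 he with ⟨rfl, rfl⟩ | ⟨rfl, rfl⟩
      · exact ih.trans huv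
      · exact ih.trans huv.symm
    · exact Relation.ReflTransGen.tail ih (hsub ⟨hcd, he⟩)

theorem switch_side {K₁ K₂ : Set (Sym2 V)} {W₁ W₂ : Set V} {w : V} (h₁ : K₁ ⊆ W₁.sym2)
    (h₂ : K₂ ⊆ W₂.sym2) (hW : W₁ ∩ W₂ ⊆ {u, v}) (hu : u ∈ W₂) (hc : ReachE K₂ u c)
    (hcw : s(c, w) ∈ K₁) : ReachE K₁ u w ∨ ReachE K₂ u v := by
  rcases hW ⟨(h₁ hcw).1, hc.mem_of_subset_sym2 h₂ hu⟩ with rfl | rfl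
  · exact .inl (single hcw)
  · exact .inr hc

-- A walk can only switch between `K₁` and `K₂` at `u` or `v`.
theorem or_of_union {K₁ K₂ : Set (Sym2 V)} {W₁ W₂ : Set V} (h₁ : K₁ ⊆ W₁.sym2)
    (h₂ : K₂ ⊆ W₂.sym2) (hW : W₁ ∩ W₂ ⊆ {u, v}) (hu₁ : u ∈ W₁) (hu₂ : u ∈ W₂)
    (h : ReachE (K₁ ∪ K₂) u v) : ReachE K₁ u v ∨ ReachE K₂ u v := by
  suffices key : ∀ z, ReachE (K₁ ∪ K₂) u z →
      (ReachE K₁ u z ∨ ReachE K₂ u z) ∨ ReachE K₁ u v ∨ ReachE K₂ u v by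
    simpa only [or_self] using key v h
  intro z hz
  induction hz with
  | refl => exact .inl (.inl .refl)
  | tail _ hcd ih =>
    rcases ih with (hc | hc) | hdone
    · rcases hcd with hcd | hcd
      · exact .inl (.inl (Relation.ReflTransGen.tail hc hcd))
      · rcases switch_side h₂ h₁ (Set.inter_comm W₁ W₂ ▸ hW) hu₁ hc hcd with hd | hd
        · exact .inl (.inr hd)
        · exact .inr (.inl hd)
    · rcases hcd with hcd | hcd
      · rcases switch_side h₁ h₂ hW hu₂ hc hcd with hd | hd
        · exact .inl (.inl hd)
        · exact .inr (.inr hd)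
      · exact .inl (.inr (Relation.ReflTransGen.tail hc hcd))
    · exact .inr hdone

end ReachE

/-- Whichever edge is removed, one of the two disjoint `u`–`v` connections survives and takes over
the role of `uv`. -/
theorem TwoECSS.of_replace {F F' P₁ P₂ : Set (Sym2 V)} {u v : V} (hF : TwoECSS F)
    (hsub : F \ {s(u, v)} ⊆ F') (h₁ : P₁ ⊆ F') (h₂ : P₂ ⊆ F') (hdisj : Disjoint P₁ P₂)
    (hP₁ : ReachE P₁ u v) (hP₂ : ReachE P₂ u v) : TwoECSS F' := by
  refine ⟨fun a b => (hF.1 a b).of_sdiff_subset hsub (hP₁.mono h₁), fun d _ a b => ?_⟩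
  have hFd : ReachE (F \ {d}) a b := by
    by_cases hd : d ∈ F
    · exact hF.2 d hd a b
    · rw [Set.sdiff_singleton_eq_self hd]
      exact hF.1 a b
  have huv : ReachE (F' \ {d}) u v := by
    by_cases hd : d ∈ P₁
    · exact hP₂.mono fun f hf => ⟨h₂ hf, fun hfd => hdisj.notMem_of_mem_left hd (hfd ▸ hf)⟩
    · exact hP₁.mono fun f hf => ⟨h₁ hf, fun hfd => hd (hfd ▸ hf)⟩
  exact hFd.of_sdiff_subset (fun f ⟨⟨hfF, hfd⟩, hfe⟩ => ⟨hsub ⟨hfF, hfe⟩, hfd⟩) huv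

namespace SimpleGraph

variable (G : SimpleGraph V)

def IsSeparatedBy (S B : Set V) : Prop :=
  ∀ ⦃x y : V⦄, G.Adj x y → x ∈ S → y ∈ S ∪ B

variable {G}

theorem eq_of_mem_edgeSet_of_mem_sym2_pair {u v : V} {f : Sym2 V} (hf : f ∈ G.edgeSet)
    (huv : f ∈ ({u, v} : Set V).sym2) : f = s(u, v) := by
  induction f using Sym2.ind with
  | _ x y =>
    have hxy : x ≠ y := G.ne_of_adj hf
    rw [Set.mk_mem_sym2_iff] at huv
    obtain ⟨rfl | rfl, rfl | rfl⟩ := huv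
    · exact absurd rfl hxy
    · rfl
    · exact Sym2.eq_swap
    · exact absurd rfl hxy

theorem reachE_sdiff_of_reflTransGen {p a b : V} {f : Sym2 V} (hp : p ∈ f)
    (h : Relation.ReflTransGen (fun x y => G.Adj x y ∧ x ≠ p ∧ y ≠ p) a b) :
    ReachE (G.edgeSet \ {f}) a b := by
  refine Relation.ReflTransGen.mono (fun x y ⟨hxy, hx, hy⟩ => ⟨hxy, ?_⟩) _ _ h
  rintro rfl
  rcases Sym2.mem_iff.1 hp with rfl | rfl
  exacts [hx rfl, hy rfl]

theorem twoECSS_edgeSet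
    (hnocut : ∀ v a b : V, a ≠ v → b ≠ v →
      Relation.ReflTransGen (fun x y => G.Adj x y ∧ x ≠ v ∧ y ≠ v) a b)
    (hV : ∀ p q : V, ∃ w, w ≠ p ∧ w ≠ q) : TwoECSS G.edgeSet := by
  refine ⟨fun a b => ?_, fun e he a b => ?_⟩
  · obtain ⟨w, hwa, hwb⟩ := hV a b
    exact Relation.ReflTransGen.mono (fun _ _ h => h.1) _ _ (hnocut w a b hwa.symm hwb.symm)
  induction e using Sym2.ind with
  | _ p q =>
    have hpq : G.Adj p q := he
    have to_q : ∀ x, x ≠ p → ReachE (G.edgeSet \ {s(p, q)}) x q := fun x hx =>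
      reachE_sdiff_of_reflTransGen (Sym2.mem_mk_left p q) (hnocut p x q hx hpq.ne')
    have hall : ∀ x, ReachE (G.edgeSet \ {s(p, q)}) x q := by
      intro x
      by_cases hx : x = p
      · obtain ⟨w, hwp, hwq⟩ := hV p q
        subst hx
        exact (reachE_sdiff_of_reflTransGen (Sym2.mem_mk_right x q)
          (hnocut q x w hpq.ne hwq)).trans (to_q w hwp)
      · exact to_q x hx
    exact (hall a).trans (hall b).symm

namespace IsSeparatedBy

variable {S B : Set V}

theorem compl (hS : G.IsSeparatedBy S B) : G.IsSeparatedBy (S ∪ B)ᶜ B := by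
  intro x y hxy hx
  by_cases hyS : y ∈ S
  · exact absurd (hS hxy.symm hyS) hx
  · by_cases hyB : y ∈ B
    · exact .inr hyB
    · exact .inl fun h => h.elim hyS hyB

theorem mem_sym2_or (hS : G.IsSeparatedBy S B) {f : Sym2 V} (hf : f ∈ G.edgeSet) :
    f ∈ (S ∪ B).sym2 ∨ f ∈ Sᶜ.sym2 := by
  induction f using Sym2.ind with
  | _ x y =>
    have hxy : G.Adj x y := hf
    by_cases hx : x ∈ S
    · exact .inl ⟨.inl hx, hS hxy hx⟩
    · by_cases hy : y ∈ S
      · exact .inl ⟨hS hxy.symm hy, .inl hy⟩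
      · exact .inr ⟨hx, hy⟩

theorem exists_reachE_inter_sym2 (hS : G.IsSeparatedBy S B) {K : Set (Sym2 V)}
    (hK : K ⊆ G.edgeSet) {y t : V} (h : ReachE K y t) (hy : y ∈ S) (ht : t ∉ S) :
    ∃ b ∈ B, ReachE (K ∩ (S ∪ B).sym2) y b := by
  induction h using Relation.ReflTransGen.head_induction_on with
  | refl => exact absurd hy ht
  | @head y c hyc _ ih =>
    have hc : c ∈ S ∪ B := hS (hK hyc) hy
    have hyc' : s(y, c) ∈ K ∩ (S ∪ B).sym2 := ⟨hyc, .inl hy, hc⟩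
    rcases hc with hc | hc
    · obtain ⟨b, hb, hcb⟩ := ih hc
      exact ⟨b, hb, Relation.ReflTransGen.head hyc' hcb⟩
    · exact ⟨c, hc, .single hyc'⟩

/-- `g` is where a path of `G - u` from `b` to `v` leaves the vertices of `S` that reach `u`. -/
theorem exists_edge_reachE_insert {u v b : V} {K : Set (Sym2 V)}
    (hS : G.IsSeparatedBy S {u, v}) (hvS : v ∉ S)
    (hreach : ∀ z ∈ S, ReachE K z u ∨ ReachE K z v) (hb : b ∈ S) (hbu : ReachE K b u)
    (hwalk : Relation.ReflTransGen (fun x y => G.Adj x y ∧ x ≠ u ∧ y ≠ u) b v) :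
    ∃ g ∈ G.edgeSet, g ∉ Sᶜ.sym2 ∧ ReachE (insert g K) u v := by
  obtain ⟨z, c, ⟨hzS, hzu⟩, hc, hzc, -, hcu⟩ :=
    hwalk.exists_mem_notMem (X := {z | z ∈ S ∧ ReachE K z u}) ⟨hb, hbu⟩ fun h => hvS h.1
  have hcv : ReachE K c v := by
    rcases hS hzc hzS with hcS | rfl | rfl
    · exact (hreach c hcS).resolve_left fun h => hc ⟨hcS, h⟩
    · exact absurd rfl hcu
    · exact .refl
  refine ⟨s(z, c), hzc, fun h => h.1 hzS, ?_⟩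
  exact ((hzu.symm.mono (Set.subset_insert _ _)).trans (.single (Set.mem_insert _ _))).trans
    (hcv.mono (Set.subset_insert _ _))

end IsSeparatedBy

variable {B : Set V} {a : V}

theorem notMem_of_reflTransGen_avoiding (ha : a ∉ B) {z : V}
    (h : Relation.ReflTransGen (fun x y => G.Adj x y ∧ x ∉ B ∧ y ∉ B) a z) : z ∉ B := by
  rcases h.cases_tail with rfl | ⟨_, _, -, -, hz⟩
  exacts [ha, hz]

theorem isSeparatedBy_setOf_reflTransGen_avoiding (ha : a ∉ B) :
    G.IsSeparatedBy {z | Relation.ReflTransGen (fun x y => G.Adj x y ∧ x ∉ B ∧ y ∉ B) a z} B := by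
  intro x y hxy hx
  by_cases hy : y ∈ B
  · exact .inr hy
  · exact .inl (Relation.ReflTransGen.tail hx ⟨hxy, notMem_of_reflTransGen_avoiding ha hx, hy⟩)

variable {S : Set V} {u v : V} {F : Set (Sym2 V)}

theorem exists_twoECSS_insert_sdiff
    (hnocut : ∀ v a b : V, a ≠ v → b ≠ v →
      Relation.ReflTransGen (fun x y => G.Adj x y ∧ x ≠ v ∧ y ≠ v) a b)
    (hS : G.IsSeparatedBy S {u, v}) (huS : u ∉ S) (hvS : v ∉ S) {b : V} (hb : b ∈ S)
    (hFG : F ⊆ G.edgeSet) (hF : TwoECSS F) (heF : s(u, v) ∈ F)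
    (hout : ReachE ((F \ {s(u, v)}) ∩ Sᶜ.sym2) u v) :
    ∃ g ∈ G.edgeSet, g ≠ s(u, v) ∧ TwoECSS (insert g (F \ {s(u, v)})) := by
  set K := F \ {s(u, v)}
  set K₁ := K ∩ (S ∪ {u, v}).sym2
  have huv : u ≠ v := G.ne_of_adj (hFG heF)
  have hreach : ∀ z ∈ S, ReachE K₁ z u ∨ ReachE K₁ z v := fun z hz => by
    obtain ⟨w, rfl | rfl, hw⟩ :=
      hS.exists_reachE_inter_sym2 (Set.sdiff_subset.trans hFG) (hF.2 _ heF z u) hz huS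
    exacts [.inl hw, .inr hw]
  obtain ⟨g, hgG, hgS, hg⟩ : ∃ g ∈ G.edgeSet, g ∉ Sᶜ.sym2 ∧ ReachE (insert g K₁) u v := by
    rcases hreach b hb with hbu | hbv
    · exact hS.exists_edge_reachE_insert hvS hreach hb hbu
        (hnocut u b v (fun h => huS (h ▸ hb)) huv.symm)
    · obtain ⟨g, hgG, hgS, hg⟩ := (Set.pair_comm u v ▸ hS).exists_edge_reachE_insert huS
        (fun z hz => (hreach z hz).symm) hb hbv (hnocut v b u (fun h => hvS (h ▸ hb)) huv)
      exact ⟨g, hgG, hgS, hg.symm⟩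
  have hdisj : Disjoint (insert g K₁) (K ∩ Sᶜ.sym2) := by
    refine Set.disjoint_insert_left.2 ⟨fun h => hgS h.2, Set.disjoint_left.2 ?_⟩
    rintro f ⟨⟨hfF, hfe⟩, hf₁⟩ ⟨-, hf₂⟩
    have hf : f ∈ ((S ∪ {u, v}) ∩ Sᶜ).sym2 := by
      rw [Set.sym2_inter]
      exact ⟨hf₁, hf₂⟩
    refine hfe (eq_of_mem_edgeSet_of_mem_sym2_pair (hFG hfF) (Set.sym2_mono ?_ hf))
    rintro w ⟨hw | hw, hwS⟩
    exacts [absurd hw hwS, hw]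
  refine ⟨g, hgG, fun h => hgS (h ▸ ⟨huS, hvS⟩), ?_⟩
  exact hF.of_replace (Set.subset_insert _ _) (Set.insert_subset_insert Set.inter_subset_left)
    (Set.inter_subset_left.trans (Set.subset_insert _ _)) hdisj hg hout

theorem exists_twoECSS_ncard_le_notMem [Finite V]
    (hnocut : ∀ v a b : V, a ≠ v → b ≠ v →
      Relation.ReflTransGen (fun x y => G.Adj x y ∧ x ≠ v ∧ y ≠ v) a b)
    (hS : G.IsSeparatedBy S {u, v}) (huS : u ∉ S) (hvS : v ∉ S) {a b : V} (ha : a ∈ S)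
    (hb : b ∉ S ∪ {u, v}) (hFG : F ⊆ G.edgeSet) (hF : TwoECSS F) :
    ∃ F' ⊆ G.edgeSet, TwoECSS F' ∧ F'.ncard ≤ F.ncard ∧ s(u, v) ∉ F' := by
  by_cases heF : s(u, v) ∉ F
  · exact ⟨F, hFG, hF, le_rfl, heF⟩
  rw [not_not] at heF
  suffices h : ∃ g ∈ G.edgeSet, g ≠ s(u, v) ∧ TwoECSS (insert g (F \ {s(u, v)})) by
    obtain ⟨g, hgG, hge, hg⟩ := h
    refine ⟨_, Set.insert_subset hgG (Set.sdiff_subset.trans hFG), hg, ?_, ?_⟩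
    · calc (insert g (F \ {s(u, v)})).ncard
          ≤ (F \ {s(u, v)}).ncard + 1 := Set.ncard_insert_le _ _
        _ = F.ncard := Set.ncard_sdiff_singleton_add_one heF
    · rintro (h | ⟨-, h⟩)
      exacts [hge h.symm, h rfl]
  set K := F \ {s(u, v)}
  have hK : ReachE (K ∩ (S ∪ {u, v}).sym2 ∪ K ∩ Sᶜ.sym2) u v :=
    (hF.2 _ heF u v).mono fun f hf =>
      (hS.mem_sym2_or (hFG hf.1)).imp (fun h => ⟨hf, h⟩) fun h => ⟨hf, h⟩
  rcases ReachE.or_of_union Set.inter_subset_right Set.inter_subset_right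
      (fun w ⟨hw, hwS⟩ => hw.resolve_left hwS) (.inr (.inl rfl)) huS hK with hside | hside
  · refine exists_twoECSS_insert_sdiff hnocut hS.compl (fun h => h (.inr (.inl rfl)))
      (fun h => h (.inr (.inr rfl))) hb hFG hF heF ?_
    rwa [compl_compl]
  · exact exists_twoECSS_insert_sdiff hnocut hS huS hvS ha hFG hF heF hside

end SimpleGraph

theorem exists_min_2ECSS_avoiding_irrelevant_edge_general [Fintype V] (G : SimpleGraph V)
    (hnocut : ∀ v a b : V, a ≠ v → b ≠ v →
      Relation.ReflTransGen (fun x y => G.Adj x y ∧ x ≠ v ∧ y ≠ v) a b)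
    (u v : V)
    (hirrelevant : ∃ a b : V, a ∉ ({u, v} : Set V) ∧ b ∉ ({u, v} : Set V) ∧
      ¬ Relation.ReflTransGen
        (fun x y => G.Adj x y ∧ x ∉ ({u, v} : Set V) ∧ y ∉ ({u, v} : Set V)) a b) :
    ∃ F ⊆ G.edgeSet, TwoECSS F ∧
      (∀ F' ⊆ G.edgeSet, TwoECSS F' → F.ncard ≤ F'.ncard) ∧
      s(u, v) ∉ F := by
  obtain ⟨a, b, ha, hb, hab⟩ := hirrelevant
  have hS := G.isSeparatedBy_setOf_reflTransGen_avoiding ha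
  have hV : ∀ p q : V, ∃ w, w ≠ p ∧ w ≠ q := exists_ne_and_ne_of_distinct
    (by rintro rfl; exact hab .refl) (fun h => ha (.inl h)) (fun h => hb (.inl h))
  obtain ⟨F, ⟨hFG, hF⟩, hmin⟩ := Set.exists_min_image {F | F ⊆ G.edgeSet ∧ TwoECSS F}
    Set.ncard (Set.toFinite _) ⟨G.edgeSet, subset_rfl, G.twoECSS_edgeSet hnocut hV⟩
  obtain ⟨F', hF'G, hF', hle, he⟩ := G.exists_twoECSS_ncard_le_notMem hnocut hS
    (G.notMem_of_reflTransGen_avoiding ha · (.inl rfl))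
    (G.notMem_of_reflTransGen_avoiding ha · (.inr rfl)) .refl
    (fun h => h.elim hab hb) hFG hF
  exact ⟨F', hF'G, hF', fun F'' h₁ h₂ => hle.trans (hmin F'' ⟨h₁, h₂⟩), he⟩

/-- Let `G` be a 2-vertex-connected simple graph and `e = uv` an edge of `G` such that
`{u, v}` is a 2-vertex cut of `G` (an irrelevant edge).  Then there exists a
minimum-size 2-edge-connected spanning subgraph of `G` that does not contain `e`. -/
theorem exists_min_2ECSS_avoiding_irrelevant_edge [Fintype V] (G : SimpleGraph V)
    (hcard : 3 ≤ Fintype.card V)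
    (hconn : G.Connected)
    (hnocut : ∀ v a b : V, a ≠ v → b ≠ v →
      Relation.ReflTransGen (fun x y => G.Adj x y ∧ x ≠ v ∧ y ≠ v) a b)
    (u v : V) (huv : G.Adj u v)
    (hirrelevant : ∃ a b : V, a ∉ ({u, v} : Set V) ∧ b ∉ ({u, v} : Set V) ∧
      ¬ Relation.ReflTransGen
        (fun x y => G.Adj x y ∧ x ∉ ({u, v} : Set V) ∧ y ∉ ({u, v} : Set V)) a b) :
    ∃ F ⊆ G.edgeSet, TwoECSS F ∧
      (∀ F' ⊆ G.edgeSet, TwoECSS F' → F.ncard ≤ F'.ncard) ∧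
      s(u, v) ∉ F :=
  exists_min_2ECSS_avoiding_irrelevant_edge_general G hnocut u v hirrelevant
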